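/- arXiv:2507.16675 — 2 statements merged into one kernel-verified Lean document; each statement's English description precedes it below -/
import Mathlib

section
/- Let f : ℝ^d → ℝ be differentiable and suppose that for all x₁, x₂ ∈ ℝ^d one has f(x₂) ≥ f(x₁) + ⟨∇f(x₁), x₂ − x₁⟩ (convexity) and that for every block ℓ ∈ {1,…,p}, every x ∈ ℝ^d and every h ∈ ℝ^{d_ℓ} the block quadratic upper bound f(x + U_ℓ h) ≤ f(x) + ⟨∇^{(ℓ)} f(x), h⟩ + (L_ℓ/2)‖h‖² holds. Then for every ℓ ∈ {1,…,p} and all x₁, x₂ ∈ ℝ^d: f(x₂) ≥ f(x₁) + ⟨∇f(x₁), x₂ − x₁⟩ + (1/(2L_ℓ))‖∇^{(ℓ)} f(x₁) − ∇^{(ℓ)} f(x₂)‖². -/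
open RealInnerProductSpace

noncomputable section

/-- The `ℓ`-th block `ℝ^{d_ℓ}` of the decomposition `ℝ^d = ℝ^{d_1} × … × ℝ^{d_p}`. -/
abbrev Blk {p : ℕ} (d : Fin p → ℕ) (ℓ : Fin p) : Type := EuclideanSpace ℝ (Fin (d ℓ))

/-- The space `ℝ^d = ℝ^{d_1} × … × ℝ^{d_p}` with the Euclidean (ℓ²) norm. -/
abbrev Sp {p : ℕ} (d : Fin p → ℕ) : Type := PiLp 2 (Blk d)

/-- The selection embedding `U_ℓ : ℝ^{d_ℓ} → ℝ^d` placing `h` in block `ℓ` and `0` elsewhere. -/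
def inj {p : ℕ} (d : Fin p → ℕ) (ℓ : Fin p) (h : Blk d ℓ) : Sp d :=
  (WithLp.equiv 2 (∀ ℓ, Blk d ℓ)).symm (Pi.single ℓ h)

/-- Membership in the class `F^coord_{0,L}(ℝ^d)`: convex, differentiable, and for each block
`ℓ` the partial gradient `∇^{(ℓ)} f` is `L_ℓ`-Lipschitz along the block `ℓ`. -/
def IsCoordSmooth {p : ℕ} (d : Fin p → ℕ) (L : Fin p → ℝ) (f : Sp d → ℝ) : Prop :=
  ConvexOn ℝ Set.univ f ∧ Differentiable ℝ f ∧
    ∀ (ℓ : Fin p) (x : Sp d) (h : Blk d ℓ),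
      ‖gradient f (x + inj d ℓ h) ℓ - gradient f x ℓ‖ ≤ L ℓ * ‖h‖

lemma inner_inj_right {p : ℕ} {d : Fin p → ℕ} (g : Sp d) (ℓ : Fin p) (h : Blk d ℓ) :
    ⟪g, inj d ℓ h⟫ = ⟪g ℓ, h⟫ := by
  rw [PiLp.inner_apply, Finset.sum_eq_single ℓ] <;> simp +contextual [inj]

section

variable {E F : Type*} [NormedAddCommGroup E] [InnerProductSpace ℝ E]
  [NormedAddCommGroup F] [InnerProductSpace ℝ F]

/-- `h = L⁻¹ • v` maximizes `⟪v, h⟫ - L / 2 * ‖h‖ ^ 2`. -/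
lemma inner_inv_smul_sub_mul_norm_sq {L : ℝ} (hL : L ≠ 0) (v : F) :
    ⟪v, L⁻¹ • v⟫ - L / 2 * ‖L⁻¹ • v‖ ^ 2 = 1 / (2 * L) * ‖v‖ ^ 2 := by
  rw [real_inner_smul_right, real_inner_self_eq_norm_sq, norm_smul, mul_pow, Real.norm_eq_abs,
    sq_abs]
  field_simp
  ring

/-- Compare the convexity bound at `x₁`, evaluated at `x₂ + U h`, with the upper bound at `x₂`
along `h = L⁻¹ • (P (g x₁) - P (g x₂))`; `P` plays the role of the adjoint of `U`. -/
lemma add_inner_add_norm_sq_le_of_upper_bound {f : E → ℝ} {g : E → E} {U : F → E} {P : E → F}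
    {L : ℝ} (hL : 0 < L) (hUP : ∀ v h, ⟪v, U h⟫ = ⟪P v, h⟫)
    (hconv : ∀ x y, f x + ⟪g x, y - x⟫ ≤ f y)
    (hupper : ∀ x h, f (x + U h) ≤ f x + ⟪P (g x), h⟫ + L / 2 * ‖h‖ ^ 2) (x₁ x₂ : E) :
    f x₁ + ⟪g x₁, x₂ - x₁⟫ + 1 / (2 * L) * ‖P (g x₁) - P (g x₂)‖ ^ 2 ≤ f x₂ := by
  set v := P (g x₁) - P (g x₂)
  set h := L⁻¹ • v
  have lower := hconv x₁ (x₂ + U h)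
  have upper := hupper x₂ h
  have split : ⟪g x₁, x₂ + U h - x₁⟫ = ⟪g x₁, x₂ - x₁⟫ + ⟪P (g x₁), h⟫ := by
    rw [add_sub_right_comm, inner_add_right, hUP]
  have gain := inner_inv_smul_sub_mul_norm_sq hL.ne' v
  rw [inner_sub_left] at gain
  linarith

end

theorem lower_bound_of_convexity_and_block_upper_bound_general {p : ℕ} {d : Fin p → ℕ}
    (L : Fin p → ℝ) (hL : ∀ ℓ, 0 < L ℓ) (f : Sp d → ℝ)
    (hconv : ∀ x₁ x₂ : Sp d, f x₂ ≥ f x₁ + ⟪gradient f x₁, x₂ - x₁⟫)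
    (hupper : ∀ (ℓ : Fin p) (x : Sp d) (h : Blk d ℓ),
      f (x + inj d ℓ h) ≤ f x + ⟪gradient f x ℓ, h⟫ + L ℓ / 2 * ‖h‖ ^ 2) :
    ∀ (ℓ : Fin p) (x₁ x₂ : Sp d),
      f x₂ ≥ f x₁ + ⟪gradient f x₁, x₂ - x₁⟫
        + 1 / (2 * L ℓ) * ‖gradient f x₁ ℓ - gradient f x₂ ℓ‖ ^ 2 :=
  fun ℓ => add_inner_add_norm_sq_le_of_upper_bound (P := fun v : Sp d => v ℓ) (hL ℓ)
    (fun v h => inner_inj_right v ℓ h) hconv (hupper ℓ)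

theorem lower_bound_of_convexity_and_block_upper_bound {p : ℕ} {d : Fin p → ℕ}
    (L : Fin p → ℝ) (hL : ∀ ℓ, 0 < L ℓ) (f : Sp d → ℝ) (hdiff : Differentiable ℝ f)
    (hconv : ∀ x₁ x₂ : Sp d, f x₂ ≥ f x₁ + ⟪gradient f x₁, x₂ - x₁⟫)
    (hupper : ∀ (ℓ : Fin p) (x : Sp d) (h : Blk d ℓ),
      f (x + inj d ℓ h) ≤ f x + ⟪gradient f x ℓ, h⟫ + L ℓ / 2 * ‖h‖ ^ 2) :
    ∀ (ℓ : Fin p) (x₁ x₂ : Sp d),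
      f x₂ ≥ f x₁ + ⟪gradient f x₁, x₂ - x₁⟫
        + 1 / (2 * L ℓ) * ‖gradient f x₁ ℓ - gradient f x₂ ℓ‖ ^ 2 :=
  lower_bound_of_convexity_and_block_upper_bound_general L hL f hconv hupper
end
end

section
/- Let f ∈ F^coord_{0,(L₁,L₂)}(ℝ^d) with two blocks, let K ≥ 1 and let (x_i)_{i=0,…,2K} be the iterates of K cycles of 2-block cyclic coordinate descent with step sizes 1/L_ℓ: for k = 0,…,K−1, x_{2k+1} = x_{2k} − (1/L₁) U₁ ∇^{(1)} f(x_{2k}) and x_{2k+2} = x_{2k+1} − (1/L₂) U₂ ∇^{(2)} f(x_{2k+1}). Then min_{i ∈ {1,…,2K−1}} ‖∇f(x_i)‖_L*² ≤ (2/(2K−1)) ( f(x₀) − f(x_{2K}) ). -/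
open RealInnerProductSpace

noncomputable section

/-! Restricted to the affine slice `z + U_ℓ ℝ^{d_ℓ}`, `f` is convex with `L_ℓ`-Lipschitz gradient,
so the descent lemma and the first-order convexity inequality combine into the interpolation
inequality `f x + ⟪∇f x, y - x⟫ + ‖∇f y - ∇f x‖² / (2L) ≤ f y`. For one exact block step
`y = x - L⁻¹ ∇f x` it gives `L⁻¹ (‖∇f x‖² + ‖∇f y‖²) ≤ 2 (f x - f y)`. Summed over the `2K` steps
the right-hand sides telescope, while on the left each residual `‖∇f(x_i)‖_L*²` with
`1 ≤ i ≤ 2K - 1` appears in full: its first block from the step of block 1 touching `x_i`, its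
second block from the step of block 2 touching `x_i`. The minimum is at most the average. -/

open Set Finset

section Smooth

variable {E : Type*} [NormedAddCommGroup E] [InnerProductSpace ℝ E] [CompleteSpace E]
  {f : E → ℝ} {g : E → E} {x y : E}

lemma HasGradientAt.hasDerivAt_comp_lineMap {g' : E} {t : ℝ}
    (h : HasGradientAt f g' (AffineMap.lineMap x y t)) :
    HasDerivAt (fun s => f (AffineMap.lineMap x y s)) ⟪g', y - x⟫ t := by
  have := h.hasFDerivAt.comp_hasDerivAt t (AffineMap.hasDerivAt_lineMap (a := x) (b := y))
  simp only [InnerProductSpace.toDual_apply_apply] at this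
  exact this

lemma ConvexOn.add_inner_le_of_hasGradientAt {g' : E} (hf : ConvexOn ℝ univ f)
    (hx : HasGradientAt f g' x) (y : E) : f x + ⟪g', y - x⟫ ≤ f y := by
  have hline := (hf.comp_affineMap (AffineMap.lineMap x y)).le_slope_of_hasDerivAt
    (mem_univ 0) (mem_univ 1) one_pos (HasGradientAt.hasDerivAt_comp_lineMap (by simpa using hx))
  simp only [slope_def_field, Function.comp_apply, AffineMap.lineMap_apply_one,
    AffineMap.lineMap_apply_zero, sub_zero, div_one] at hline
  linarith

lemma le_add_inner_add_of_lipschitz_gradient (hg : ∀ u, HasGradientAt f (g u) u) {Lc : ℝ}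
    (hlip : ∀ u v, ‖g u - g v‖ ≤ Lc * ‖u - v‖) (x y : E) :
    f y ≤ f x + ⟪g x, y - x⟫ + Lc / 2 * ‖y - x‖ ^ 2 := by
  set v := y - x
  have hquad : ∀ t : ℝ, HasDerivAt (fun t => f x + t * ⟪g x, v⟫ + Lc / 2 * t ^ 2 * ‖v‖ ^ 2)
      (⟪g x, v⟫ + Lc * t * ‖v‖ ^ 2) t := fun t => by
    have := (((hasDerivAt_id t).mul_const ⟪g x, v⟫).const_add (f x)).add
      (((hasDerivAt_pow 2 t).const_mul (Lc / 2)).mul_const (‖v‖ ^ 2))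
    exact this.congr_deriv (by simp only [Nat.cast_ofNat, Nat.add_one_sub_one, pow_one]; ring)
  have hline t := (hg (AffineMap.lineMap x y t)).hasDerivAt_comp_lineMap
  have hslope : ∀ t ∈ Ico (0 : ℝ) 1,
      ⟪g (AffineMap.lineMap x y t), v⟫ ≤ ⟪g x, v⟫ + Lc * t * ‖v‖ ^ 2 := fun t ht => by
    have hdist : ‖AffineMap.lineMap x y t - x‖ = t * ‖v‖ := by
      rw [← vsub_eq_sub, AffineMap.lineMap_vsub_left, vsub_eq_sub, norm_smul,
        Real.norm_of_nonneg ht.1]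
    have := (real_inner_le_norm (g (AffineMap.lineMap x y t) - g x) v).trans
      (mul_le_mul_of_nonneg_right ((hlip _ _).trans_eq (by rw [hdist])) (norm_nonneg v))
    rw [inner_sub_left] at this
    nlinarith
  have := image_le_of_deriv_right_le_deriv_boundary
    (fun t _ => (hline t).continuousAt.continuousWithinAt)
    (fun t _ => (hline t).hasDerivWithinAt) (by simp)
    (fun t _ => (hquad t).continuousAt.continuousWithinAt) (fun t _ => (hquad t).hasDerivWithinAt)
    hslope (right_mem_Icc.2 zero_le_one)
  simpa using this

lemma add_inner_add_inv_mul_norm_sq_le_of_lipschitz_gradient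
    (hg : ∀ u, HasGradientAt f (g u) u) (hf : ConvexOn ℝ univ f) {Lc : ℝ} (hLc : 0 < Lc)
    (hlip : ∀ u v, ‖g u - g v‖ ≤ Lc * ‖u - v‖) (x y : E) :
    f x + ⟪g x, y - x⟫ + (2 * Lc)⁻¹ * ‖g y - g x‖ ^ 2 ≤ f y := by
  set w := g y - g x
  have hupper := le_add_inner_add_of_lipschitz_gradient hg hlip y (y - Lc⁻¹ • w)
  have hlower := hf.add_inner_le_of_hasGradientAt (hg x) (y - Lc⁻¹ • w)
  rw [show y - Lc⁻¹ • w - y = -(Lc⁻¹ • w) by abel, inner_neg_right, real_inner_smul_right,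
    norm_neg, norm_smul, Real.norm_of_nonneg (inv_nonneg.2 hLc.le)] at hupper
  rw [show y - Lc⁻¹ • w - x = (y - x) - Lc⁻¹ • w by abel, inner_sub_right,
    real_inner_smul_right] at hlower
  have hw : ⟪g y, w⟫ - ⟪g x, w⟫ = ‖w‖ ^ 2 := by
    rw [← inner_sub_left, real_inner_self_eq_norm_sq]
  have hcoef : Lc / 2 * (Lc⁻¹ * ‖w‖) ^ 2 = Lc⁻¹ * ‖w‖ ^ 2 - (2 * Lc)⁻¹ * ‖w‖ ^ 2 := by
    field_simp; ring
  linear_combination hupper + hlower - Lc⁻¹ * hw + hcoef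

lemma inv_mul_sq_norm_add_sq_norm_le_of_gradient_step (hg : ∀ u, HasGradientAt f (g u) u)
    (hf : ConvexOn ℝ univ f) {Lc : ℝ} (hLc : 0 < Lc) (hlip : ∀ u v, ‖g u - g v‖ ≤ Lc * ‖u - v‖)
    (hy : y = x - Lc⁻¹ • g x) : Lc⁻¹ * (‖g x‖ ^ 2 + ‖g y‖ ^ 2) ≤ 2 * (f x - f y) := by
  have h := add_inner_add_inv_mul_norm_sq_le_of_lipschitz_gradient hg hf hLc hlip y x
  rw [show x - y = Lc⁻¹ • g x by rw [hy]; abel, real_inner_smul_right, norm_sub_sq_real,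
    mul_inv, real_inner_comm] at h
  linear_combination 2 * h

end Smooth

section Blocks

variable {p : ℕ} {d : Fin p → ℕ}

def injCLM (d : Fin p → ℕ) (ℓ : Fin p) : Blk d ℓ →L[ℝ] Sp d :=
  (PiLp.continuousLinearEquiv 2 ℝ (Blk d)).symm.toContinuousLinearMap ∘L
    ContinuousLinearMap.single ℝ (Blk d) ℓ

@[simp] lemma injCLM_apply (ℓ : Fin p) (u : Blk d ℓ) : injCLM d ℓ u = inj d ℓ u := rfl

lemma inj_zero (ℓ : Fin p) : inj d ℓ 0 = 0 := map_zero (injCLM d ℓ)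

lemma inj_sub (ℓ : Fin p) (u v : Blk d ℓ) : inj d ℓ (u - v) = inj d ℓ u - inj d ℓ v :=
  map_sub (injCLM d ℓ) u v

lemma inj_smul (ℓ : Fin p) (c : ℝ) (u : Blk d ℓ) : inj d ℓ (c • u) = c • inj d ℓ u :=
  map_smul (injCLM d ℓ) c u

lemma inj_apply_self (ℓ : Fin p) (u : Blk d ℓ) : inj d ℓ u ℓ = u := PiLp.single_eq_same 2 ℓ u

lemma inj_apply_of_ne {ℓ j : Fin p} (h : j ≠ ℓ) (u : Blk d ℓ) : inj d ℓ u j = 0 :=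
  PiLp.single_eq_of_ne 2 h u

lemma inner_inj_left (ℓ : Fin p) (u : Blk d ℓ) (w : Sp d) : ⟪inj d ℓ u, w⟫ = ⟪u, w ℓ⟫ := by
  rw [PiLp.inner_apply, sum_eq_single_of_mem ℓ (mem_univ ℓ), inj_apply_self]
  intro j _ hj
  rw [inj_apply_of_ne hj, inner_zero_left]

lemma HasGradientAt.comp_add_inj {f : Sp d → ℝ} {G z : Sp d} {ℓ : Fin p} {u : Blk d ℓ}
    (h : HasGradientAt f G (z + inj d ℓ u)) :
    HasGradientAt (fun v => f (z + inj d ℓ v)) (G ℓ) u := by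
  have hcomp := h.hasFDerivAt.comp u (((injCLM d ℓ).hasFDerivAt).const_add z)
  rw [hasGradientAt_iff_hasFDerivAt]
  refine hcomp.congr_fderiv (ContinuousLinearMap.ext fun v => ?_)
  simp only [ContinuousLinearMap.comp_apply, InnerProductSpace.toDual_apply_apply, injCLM_apply]
  rw [real_inner_comm, inner_inj_left, real_inner_comm]

lemma ConvexOn.comp_add_inj {f : Sp d → ℝ} (hf : ConvexOn ℝ univ f) (z : Sp d) (ℓ : Fin p) :
    ConvexOn ℝ univ (fun v => f (z + inj d ℓ v)) :=
  (hf.translate_right z).comp_linearMap (injCLM d ℓ).toLinearMap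

lemma IsCoordSmooth.inv_mul_sq_norm_add_sq_norm_le_of_block_step {L : Fin p → ℝ}
    {f : Sp d → ℝ} (hf : IsCoordSmooth d L f) {ℓ : Fin p} (hL : 0 < L ℓ) {z y : Sp d}
    (hy : y = z - (L ℓ)⁻¹ • inj d ℓ (gradient f z ℓ)) :
    (L ℓ)⁻¹ * (‖gradient f z ℓ‖ ^ 2 + ‖gradient f y ℓ‖ ^ 2) ≤ 2 * (f z - f y) := by
  obtain ⟨hconv, hdiff, hlip⟩ := hf
  have hy' : z + inj d ℓ (0 - (L ℓ)⁻¹ • gradient f z ℓ) = y := by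
    rw [hy, inj_sub, inj_zero, inj_smul, zero_sub, ← sub_eq_add_neg]
  have := inv_mul_sq_norm_add_sq_norm_le_of_gradient_step
    (f := fun v => f (z + inj d ℓ v)) (g := fun v => gradient f (z + inj d ℓ v) ℓ)
    (fun u => (hdiff _).hasGradientAt.comp_add_inj) (hconv.comp_add_inj z ℓ) hL
    (fun u v => by simpa [inj_sub, add_add_sub_cancel] using hlip ℓ (z + inj d ℓ v) (u - v))
    (x := 0) (y := 0 - (L ℓ)⁻¹ • gradient f z ℓ) (by rw [inj_zero, add_zero])
  simpa only [inj_zero, add_zero, hy'] using this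

end Blocks

lemma sum_Icc_add_le_of_alternating_steps {A B F : ℕ → ℝ} {K : ℕ} (hK : 1 ≤ K)
    (hA : ∀ k < K, A (2 * k) + A (2 * k + 1) ≤ F (2 * k) - F (2 * k + 1))
    (hB : ∀ k < K, B (2 * k + 1) + B (2 * k + 2) ≤ F (2 * k + 1) - F (2 * k + 2)) :
    A 0 + ∑ i ∈ Icc 1 (2 * K - 1), (A i + B i) + B (2 * K) ≤ F 0 - F (2 * K) := by
  induction K, hK using Nat.le_induction with
  | base =>
    simp only [Nat.reduceMul, Nat.reduceSub, Finset.Icc_self, sum_singleton]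
    linarith [hA 0 one_pos, hB 0 one_pos]
  | succ n hn ih =>
    have hsplit : ∑ i ∈ Icc 1 (2 * (n + 1) - 1), (A i + B i)
        = ∑ i ∈ Icc 1 (2 * n - 1), (A i + B i) + (A (2 * n) + B (2 * n))
          + (A (2 * n + 1) + B (2 * n + 1)) := by
      rw [show 2 * (n + 1) - 1 = 2 * n - 1 + 1 + 1 by omega, sum_Icc_succ_top (by omega),
        sum_Icc_succ_top (by omega), show 2 * n - 1 + 1 = 2 * n by omega]
    rw [hsplit, show 2 * (n + 1) = 2 * n + 2 by ring]
    linarith [ih (fun k hk => hA k (by omega)) (fun k hk => hB k (by omega)),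
      hA n (by omega), hB n (by omega)]

lemma Finset.inf'_le_sum_div_card {ι α : Type*} [Field α] [LinearOrder α]
    [IsStrictOrderedRing α] {s : Finset ι} (hs : s.Nonempty) (N : ι → α) :
    s.inf' hs N ≤ (∑ i ∈ s, N i) / #s := by
  rw [le_div_iff₀ (by exact_mod_cast hs.card_pos), mul_comm, ← nsmul_eq_mul]
  exact s.card_nsmul_le_sum N _ fun i hi => s.inf'_le N hi

theorem min_residual_gradient_two_block_ccd {d : Fin 2 → ℕ} (L : Fin 2 → ℝ)
    (hL : ∀ ℓ, 0 < L ℓ) (f : Sp d → ℝ) (hf : IsCoordSmooth d L f)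
    (K : ℕ) (hK : 1 ≤ K) (x : ℕ → Sp d)
    (h1 : ∀ k < K, x (2 * k + 1) = x (2 * k) - (L 0)⁻¹ • inj d 0 (gradient f (x (2 * k)) 0))
    (h2 : ∀ k < K, x (2 * k + 2) = x (2 * k + 1) - (L 1)⁻¹ • inj d 1 (gradient f (x (2 * k + 1)) 1)) :
    (Finset.Icc 1 (2 * K - 1)).inf' (Finset.nonempty_Icc.mpr (by omega))
        (fun i => ∑ ℓ, (L ℓ)⁻¹ * ‖gradient f (x i) ℓ‖ ^ 2)
      ≤ 2 / (2 * (K : ℝ) - 1) * (f (x 0) - f (x (2 * K))) := by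
  set N : ℕ → ℝ := fun i => ∑ ℓ, (L ℓ)⁻¹ * ‖gradient f (x i) ℓ‖ ^ 2
  have hres_nonneg ℓ i : 0 ≤ (L ℓ)⁻¹ * ‖gradient f (x i) ℓ‖ ^ 2 :=
    mul_nonneg (inv_nonneg.2 (hL ℓ).le) (sq_nonneg _)
  have hsum : ∑ i ∈ Icc 1 (2 * K - 1), N i ≤ 2 * (f (x 0) - f (x (2 * K))) := by
    have := sum_Icc_add_le_of_alternating_steps hK
      (A := fun i => (L 0)⁻¹ * ‖gradient f (x i) 0‖ ^ 2)
      (B := fun i => (L 1)⁻¹ * ‖gradient f (x i) 1‖ ^ 2) (F := fun i => 2 * f (x i))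
      (fun k hk => by
        linear_combination hf.inv_mul_sq_norm_add_sq_norm_le_of_block_step (hL 0) (h1 k hk))
      (fun k hk => by
        linear_combination hf.inv_mul_sq_norm_add_sq_norm_le_of_block_step (hL 1) (h2 k hk))
    simp only [N, Fin.sum_univ_two]
    linarith [hres_nonneg 0 0, hres_nonneg 1 (2 * K)]
  have hcard : (#(Icc 1 (2 * K - 1)) : ℝ) = 2 * K - 1 := by
    rw [Nat.card_Icc, Nat.add_sub_cancel, Nat.cast_sub (by omega)]
    push_cast; ring
  calc _ ≤ (∑ i ∈ Icc 1 (2 * K - 1), N i) / (2 * K - 1) := by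
        rw [← hcard]; exact inf'_le_sum_div_card _ N
    _ ≤ 2 * (f (x 0) - f (x (2 * K))) / (2 * K - 1) :=
        div_le_div_of_nonneg_right hsum (by linarith [show (1 : ℝ) ≤ K by exact_mod_cast hK])
    _ = _ := by ring
end
end
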